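/- arXiv:1203.3405 — 9 statements merged into one kernel-verified Lean document; each statement's English description precedes it below -/
import Mathlib

section
/- Let T: [0,1) → [0,1) be an interval translation map of two intervals with T(x) = x + γ₁ on [0, β₁) and T(x) = x + γ₂ on [β₁, 1), where γ₁ > 0, γ₂ < 0, β₁ + γ₁ ≤ 1, β₁ + γ₂ ≥ 0. Then for every x ∈ [0,1) there exists n with 1 ≤ n ≤ max(⌊β₁/γ₁⌋, ⌊(1-β₁)/|γ₂|⌋) + 1 such that Tⁿ(x) ∈ [β₁ + γ₂, β₁ + γ₁). In particular Δ = [β₁ + γ₂, β₁ + γ₁) is a regular interval for T. -/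
/-!
Below `Δ = [β₁ + γ₂, β₁ + γ₁)` the map is a translation by `γ₁`, so an orbit climbs in steps of
length `γ₁` and lands in `[β₁ + γ₂, β₁ + γ₂ + γ₁) ⊆ Δ` after `⌈(β₁ + γ₂ - x)/γ₁⌉` steps; above `Δ`
it descends in steps of length `|γ₂|` and symmetrically lands in `[β₁ + γ₁ + γ₂, β₁ + γ₁) ⊆ Δ`.
Since `Δ` is `T`-invariant, a point already in `Δ` needs just one step.
-/

open Set

theorem Function.iterate_eq_add_mul_of_forall_lt {T : ℝ → ℝ} {s : Set ℝ} {γ x : ℝ}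
    (hT : ∀ y ∈ s, T y = y + γ) :
    ∀ {n : ℕ}, (∀ m < n, x + m * γ ∈ s) → T^[n] x = x + n * γ
  | 0, _ => by simp
  | n + 1, hs => by
    rw [Function.iterate_succ_apply', iterate_eq_add_mul_of_forall_lt hT fun m hm => hs m (by omega),
      hT _ (by simpa using hs n n.lt_succ_self)]
    push_cast
    ring

theorem exists_iterate_mem_Ico_of_translate_pos {T : ℝ → ℝ} {a c γ x : ℝ} (hγ : 0 < γ)
    (hT : ∀ y ∈ Ico a c, T y = y + γ) (hax : a ≤ x) (hxc : x < c) :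
    ∃ n : ℕ, 0 < n ∧ ((n : ℝ) - 1) * γ ≤ c - x ∧ T^[n] x ∈ Ico c (c + γ) := by
  have hpos : 0 < (c - x) / γ := div_pos (sub_pos.mpr hxc) hγ
  set n := ⌈(c - x) / γ⌉₊
  have hn_ge : c - x ≤ n * γ := (div_le_iff₀ hγ).mp (Nat.le_ceil _)
  have hn_lt : ((n : ℝ) - 1) * γ < c - x := by
    rw [← lt_div_iff₀ hγ, sub_lt_iff_lt_add]
    exact Nat.ceil_lt_add_one hpos.le
  have hiter : T^[n] x = x + n * γ := by
    refine Function.iterate_eq_add_mul_of_forall_lt hT fun m hm => ⟨?_, ?_⟩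
    · nlinarith [(Nat.cast_nonneg m : (0 : ℝ) ≤ m)]
    · have : (m : ℝ) ≤ n - 1 := by
        rw [le_sub_iff_add_le]; exact_mod_cast hm
      nlinarith
  refine ⟨n, Nat.ceil_pos.mpr hpos, hn_lt.le, ?_⟩
  rw [hiter]
  constructor <;> linarith

theorem exists_iterate_mem_Ico_of_translate_neg {T : ℝ → ℝ} {b c γ x : ℝ} (hγ : γ < 0)
    (hT : ∀ y ∈ Ico c b, T y = y + γ) (hcx : c ≤ x) (hxb : x < b) :
    ∃ n : ℕ, 0 < n ∧ ((n : ℝ) - 1) * -γ ≤ x - c ∧ T^[n] x ∈ Ico (c + γ) c := by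
  have hγ' : 0 < -γ := neg_pos.mpr hγ
  set n := ⌊(x - c) / -γ⌋₊ + 1
  have hn_le : ((n : ℝ) - 1) * -γ ≤ x - c := by
    have := Nat.floor_le (div_nonneg (sub_nonneg.mpr hcx) hγ'.le)
    rw [le_div_iff₀ hγ'] at this
    simpa [n] using this
  have hn_gt : x - c < n * -γ := by
    have := Nat.lt_floor_add_one ((x - c) / -γ)
    rw [div_lt_iff₀ hγ'] at this
    simpa [n] using this
  have hiter : T^[n] x = x + n * γ := by
    refine Function.iterate_eq_add_mul_of_forall_lt hT fun m hm => ⟨?_, ?_⟩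
    · have : (m : ℝ) ≤ n - 1 := by
        rw [le_sub_iff_add_le]; exact_mod_cast hm
      nlinarith
    · nlinarith [(Nat.cast_nonneg m : (0 : ℝ) ≤ m)]
  refine ⟨n, Nat.succ_pos _, hn_le, ?_⟩
  rw [hiter]
  constructor <;> linarith

theorem natCast_le_floor_div_add_one {n : ℕ} {r γ : ℝ} (hγ : 0 < γ) (h : ((n : ℝ) - 1) * γ ≤ r) :
    (n : ℤ) ≤ ⌊r / γ⌋ + 1 := by
  have : (n : ℤ) - 1 ≤ ⌊r / γ⌋ := Int.le_floor.mpr (by push_cast; rwa [le_div_iff₀ hγ])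
  omega

theorem two_itm_regular_general (β₁ γ₁ γ₂ : ℝ) (T : ℝ → ℝ)
    (hβ₁' : β₁ < 1)
    (hγ₁ : 0 < γ₁) (hγ₂ : γ₂ < 0)
    (hT₁ : ∀ x ∈ Set.Ico (0:ℝ) β₁, T x = x + γ₁)
    (hT₂ : ∀ x ∈ Set.Ico β₁ (1:ℝ), T x = x + γ₂) :
    ∀ x ∈ Set.Ico (0:ℝ) 1, ∃ n : ℕ, 1 ≤ n ∧
      (n : ℤ) ≤ max ⌊β₁ / γ₁⌋ ⌊(1 - β₁) / (-γ₂)⌋ + 1 ∧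
      T^[n] x ∈ Set.Ico (β₁ + γ₂) (β₁ + γ₁) := by
  rintro x ⟨hx0, hx1⟩
  have hmax_left := le_max_left ⌊β₁ / γ₁⌋ ⌊(1 - β₁) / (-γ₂)⌋
  have hmax_right := le_max_right ⌊β₁ / γ₁⌋ ⌊(1 - β₁) / (-γ₂)⌋
  rcases lt_or_ge x (β₁ + γ₂) with hbelow | hge
  · obtain ⟨n, hn, hsteps, hmem⟩ := exists_iterate_mem_Ico_of_translate_pos hγ₁
      (fun y hy => hT₁ y ⟨hy.1, by linarith [hy.2]⟩) hx0 hbelow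
    have := natCast_le_floor_div_add_one (r := β₁) hγ₁ (by linarith)
    exact ⟨n, hn, by omega, Ico_subset_Ico le_rfl (by linarith) hmem⟩
  rcases lt_or_ge x (β₁ + γ₁) with hinside | habove
  · have hfloor : 0 ≤ ⌊(1 - β₁) / (-γ₂)⌋ :=
      Int.floor_nonneg.mpr (div_nonneg (by linarith) (by linarith))
    refine ⟨1, le_rfl, by omega, ?_⟩
    rcases lt_or_ge x β₁ with hleft | hright
    · rw [Function.iterate_one, hT₁ x ⟨hx0, hleft⟩]; constructor <;> linarith
    · rw [Function.iterate_one, hT₂ x ⟨hright, hx1⟩]; constructor <;> linarith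
  · obtain ⟨n, hn, hsteps, hmem⟩ := exists_iterate_mem_Ico_of_translate_neg hγ₂
      (fun y hy => hT₂ y ⟨by linarith [hy.1], hy.2⟩) habove hx1
    have := natCast_le_floor_div_add_one (r := 1 - β₁) (neg_pos.mpr hγ₂) (by linarith)
    exact ⟨n, hn, by omega, Ico_subset_Ico (by linarith) le_rfl hmem⟩

/-- For an ITM of two intervals with `γ₁ > 0 > γ₂`, every point of `[0,1)`
enters `Δ = [β₁ + γ₂, β₁ + γ₁)` within `max(⌊β₁/γ₁⌋, ⌊(1-β₁)/|γ₂|⌋) + 1`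
iterates; in particular `Δ` is a regular interval for `T`. -/
theorem two_itm_regular (β₁ γ₁ γ₂ : ℝ) (T : ℝ → ℝ)
    (hβ₁ : 0 < β₁) (hβ₁' : β₁ < 1)
    (hγ₁ : 0 < γ₁) (hγ₂ : γ₂ < 0)
    (h₁ : β₁ + γ₁ ≤ 1) (h₂ : 0 ≤ β₁ + γ₂)
    (hT₁ : ∀ x ∈ Set.Ico (0:ℝ) β₁, T x = x + γ₁)
    (hT₂ : ∀ x ∈ Set.Ico β₁ (1:ℝ), T x = x + γ₂) :
    ∀ x ∈ Set.Ico (0:ℝ) 1, ∃ n : ℕ, 1 ≤ n ∧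
      (n : ℤ) ≤ max ⌊β₁ / γ₁⌋ ⌊(1 - β₁) / (-γ₂)⌋ + 1 ∧
      T^[n] x ∈ Set.Ico (β₁ + γ₂) (β₁ + γ₁) :=
  two_itm_regular_general β₁ γ₁ γ₂ T hβ₁' hγ₁ hγ₂ hT₁ hT₂
end

section
/- Let T be an interval translation map of d intervals on Ω = [0,1), with translation vector (γ₁,...,γ_d), γ₁ > 0, γ_d < 0, and suppose Δ₁ ∩ T(Ω) ≠ ∅ and Δ_d ∩ T(Ω) ≠ ∅. Let I₋ = {i : γᵢ < 0} and I₊ = {i : γᵢ > 0}, and set δ₀ = min_{i ∈ I₋}(β_{i-1} + γᵢ), δ₁ = max_{i ∈ I₊}(β_i + γᵢ). Then Δ = [δ₀, δ₁) satisfies T(Δ) ⊆ Δ. -/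
/-! Each `Δᵢ` is a nonempty subinterval of `[0,1)` and `T` translates it onto
`[β_{i-1} + γᵢ, βᵢ + γᵢ) ⊆ [0,1)`; hence `0 ≤ δ₀` and `δ₁ ≤ 1`, so every `x ∈ [δ₀, δ₁)` lies in
some `Δᵢ`. A negative translation keeps `T x < x < δ₁` and `T x ≥ β_{i-1} + γᵢ ≥ δ₀` by
minimality of `δ₀`; a positive one is symmetric, using the maximality of `δ₁`. -/

open Set

theorem Fin.exists_mem_Ico_castSucc_succ {α : Type*} [LinearOrder α] {x : α} :
    ∀ {d : ℕ} {β : Fin (d + 1) → α}, x ∈ Ico (β 0) (β (Fin.last d)) →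
      ∃ i : Fin d, x ∈ Ico (β i.castSucc) (β i.succ)
  | 0, _, hx => absurd hx (by simp)
  | d + 1, β, hx => by
    by_cases hlt : x < β (Fin.last d).castSucc
    · obtain ⟨i, hi⟩ := exists_mem_Ico_castSucc_succ (β := fun i => β i.castSucc) ⟨hx.1, hlt⟩
      exact ⟨i.castSucc, hi⟩
    · exact ⟨Fin.last d, le_of_not_gt hlt, hx.2⟩

theorem Set.Ico_add_const_subset_of_eqOn {M : Type*} [AddCommMonoid M] [PartialOrder M]
    [IsOrderedCancelAddMonoid M] [ExistsAddOfLE M] {T : M → M} {a b c : M} {s t : Set M}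
    (hT : EqOn T (· + c) (Ico a b)) (hs : Ico a b ⊆ s) (hmap : MapsTo T s t) :
    Ico (a + c) (b + c) ⊆ t := by
  rw [← image_add_const_Ico, ← hT.image_eq]
  exact (hmap.mono_left hs).image_subset

theorem fitting_trap_general
    (d : ℕ) (β : Fin (d + 1) → ℝ) (γ : Fin d → ℝ) (T : ℝ → ℝ)
    (hβ : StrictMono β) (hβ0 : β 0 = 0) (hβd : β (Fin.last d) = 1)
    (hT : ∀ i : Fin d, ∀ x ∈ Set.Ico (β i.castSucc) (β i.succ), T x = x + γ i)
    (hmap : Set.MapsTo T (Set.Ico 0 1) (Set.Ico 0 1))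
    (δ₀ δ₁ : ℝ)
    (j : Fin d) (hδ₀ : δ₀ = β j.castSucc + γ j)
    (hδ₀min : ∀ i, γ i < 0 → δ₀ ≤ β i.castSucc + γ i)
    (k : Fin d) (hδ₁ : δ₁ = β k.succ + γ k)
    (hδ₁max : ∀ i, 0 < γ i → β i.succ + γ i ≤ δ₁)
    : T '' Set.Ico δ₀ δ₁ ⊆ Set.Ico δ₀ δ₁ := by
  have hbounds (i : Fin d) : 0 ≤ β i.castSucc + γ i ∧ β i.succ + γ i ≤ 1 := by
    have hlt : β i.castSucc + γ i < β i.succ + γ i := by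
      gcongr; exact hβ Fin.castSucc_lt_succ
    refine (Ico_subset_Ico_iff hlt).1 (Ico_add_const_subset_of_eqOn (hT i) ?_ hmap)
    rw [← hβ0, ← hβd]
    exact Ico_subset_Ico (hβ.monotone (Fin.zero_le _)) (hβ.monotone (Fin.le_last _))
  have hδ₀_nonneg : 0 ≤ δ₀ := hδ₀ ▸ (hbounds j).1
  have hδ₁_le_one : δ₁ ≤ 1 := hδ₁ ▸ (hbounds k).2
  rintro _ ⟨x, hx, rfl⟩
  obtain ⟨i, hi⟩ := Fin.exists_mem_Ico_castSucc_succ (x := x) (β := β)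
    (by rw [hβ0, hβd]; exact ⟨hδ₀_nonneg.trans hx.1, hx.2.trans_le hδ₁_le_one⟩)
  rw [hT i x hi]
  rcases lt_trichotomy (γ i) 0 with hneg | hzero | hpos
  · exact ⟨(hδ₀min i hneg).trans (by linarith [hi.1]), by linarith [hx.2]⟩
  · simpa [hzero] using hx
  · exact ⟨by linarith [hx.1], lt_of_lt_of_le (by linarith [hi.2]) (hδ₁max i hpos)⟩

/-- For an ITM of `d` intervals in the irreducible case, with
`δ₀ = min_{γᵢ<0}(β_{i-1}+γᵢ)` and `δ₁ = max_{γᵢ>0}(βᵢ+γᵢ)`, the interval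
`Δ = [δ₀, δ₁)` is forward invariant: `T(Δ) ⊆ Δ`. -/
theorem fitting_trap
    (d : ℕ) (hd : 0 < d) (β : Fin (d + 1) → ℝ) (γ : Fin d → ℝ) (T : ℝ → ℝ)
    (hβ : StrictMono β) (hβ0 : β 0 = 0) (hβd : β (Fin.last d) = 1)
    (hγ : ∀ i, γ i ≠ 0)
    (hT : ∀ i : Fin d, ∀ x ∈ Set.Ico (β i.castSucc) (β i.succ), T x = x + γ i)
    (hmap : Set.MapsTo T (Set.Ico 0 1) (Set.Ico 0 1))
    (hγ₁ : 0 < γ ⟨0, hd⟩) (hγd : γ ⟨d - 1, Nat.sub_lt hd one_pos⟩ < 0)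
    (hΔ₁ : (Set.Ico (β (⟨0, hd⟩ : Fin d).castSucc) (β (⟨0, hd⟩ : Fin d).succ) ∩
      T '' Set.Ico 0 1).Nonempty)
    (hΔd : (Set.Ico (β (⟨d - 1, Nat.sub_lt hd one_pos⟩ : Fin d).castSucc)
      (β (⟨d - 1, Nat.sub_lt hd one_pos⟩ : Fin d).succ) ∩ T '' Set.Ico 0 1).Nonempty)
    (δ₀ δ₁ : ℝ)
    (j : Fin d) (hj : γ j < 0) (hδ₀ : δ₀ = β j.castSucc + γ j)
    (hδ₀min : ∀ i, γ i < 0 → δ₀ ≤ β i.castSucc + γ i)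
    (k : Fin d) (hk : 0 < γ k) (hδ₁ : δ₁ = β k.succ + γ k)
    (hδ₁max : ∀ i, 0 < γ i → β i.succ + γ i ≤ δ₁)
    : T '' Set.Ico δ₀ δ₁ ⊆ Set.Ico δ₀ δ₁ :=
  fitting_trap_general d β γ T hβ hβ0 hβd hT hmap δ₀ δ₁ j hδ₀ hδ₀min k hδ₁ hδ₁max
end

section
/- Let T be an ITM and suppose the restriction of T to its limit set X is transitive, where X is the closure of the intersection of the forward images Ω_n = Tⁿ(Ω). If there exists a T-regular interval Δ such that the first-return map T_Δ is of finite type, then T is of finite type. -/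
/-!
Regularity bounds the return times of `T_Δ` by `N`, so a `T`-orbit segment of length `r`
starting in `Δ` makes more than `r / N - 1` returns to `Δ` and then fewer than `N`
further steps. Once the images `T_Δ^[k] '' Δ` have stabilized at `k = n`, every point
of `T^[(n+1) N] '' Ω` is thus a short `T`-orbit segment starting in `T_Δ^[M] '' Δ`
for arbitrarily large `M`, and `T_Δ^[M] '' Δ ⊆ T^[M] '' Ω`; hence it lies in
`T^[(n+1) N + 1] '' Ω`.
-/

open Function Set

section Iterates

variable {α : Type*} {f : α → α} {s : Set α}

theorem image_iterate_add_eq_of_image_iterate_succ_eq {n : ℕ}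
    (h : f^[n + 1] '' s = f^[n] '' s) (k : ℕ) : f^[k + n] '' s = f^[n] '' s := by
  have hfix : IsFixedPt (image f) (f^[n] '' s) := by
    rw [IsFixedPt, ← image_comp, ← iterate_succ', h]
  rw [iterate_add, image_comp, hfix.image_iterate k]

theorem Set.MapsTo.image_iterate_image_iterate_subset (h : MapsTo f s s) (i j : ℕ) :
    f^[j] '' (f^[i] '' s) ⊆ f^[i] '' s := by
  rw [← image_comp, ← iterate_add, add_comm, iterate_add, image_comp]
  exact image_mono (h.iterate j).image_subset

end Iterates

def IsInducedMapWithin {α : Type*} (T S : α → α) (Δ : Set α) (N : ℕ) : Prop :=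
  ∀ z ∈ Δ, ∃ τ, 1 ≤ τ ∧ τ < N ∧ T^[τ] z ∈ Δ ∧ S z = T^[τ] z

namespace IsInducedMapWithin

variable {α : Type*} {T S : α → α} {Δ Ω : Set α} {N : ℕ}

theorem of_firstReturn (hΔ : Δ ⊆ Ω)
    (hreg : ∀ x ∈ Ω, ∃ n : ℕ, 1 ≤ n ∧ n < N ∧ T^[n] x ∈ Δ)
    (hS : ∀ x ∈ Δ, ∃ n : ℕ, 1 ≤ n ∧ T^[n] x ∈ Δ ∧
      S x = T^[n] x ∧ ∀ m : ℕ, 1 ≤ m → m < n → T^[m] x ∉ Δ) :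
    IsInducedMapWithin T S Δ N := by
  intro z hz
  obtain ⟨τ, hτ, hτΔ, hSz, hfirst⟩ := hS z hz
  obtain ⟨n, hn, hnN, hnΔ⟩ := hreg z (hΔ hz)
  have hτn : τ ≤ n := not_lt.mp fun hnτ ↦ hfirst n hn hnτ hnΔ
  exact ⟨τ, hτ, hτn.trans_lt hnN, hτΔ, hSz⟩

variable (h : IsInducedMapWithin T S Δ N)
include h

theorem mapsTo : MapsTo S Δ Δ := fun z hz ↦ by
  obtain ⟨τ, -, -, hτΔ, hSz⟩ := h z hz
  exact hSz ▸ hτΔ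

theorem exists_iterate_eq (k : ℕ) {z : α} (hz : z ∈ Δ) : ∃ s, k ≤ s ∧ S^[k] z = T^[s] z := by
  induction k with
  | zero => exact ⟨0, le_rfl, rfl⟩
  | succ k ih =>
    obtain ⟨s, hks, hs⟩ := ih
    obtain ⟨τ, hτ, -, -, hSz⟩ := h _ (h.mapsTo.iterate k hz)
    refine ⟨τ + s, by omega, ?_⟩
    rw [iterate_succ_apply', hSz, hs, ← iterate_add_apply]

theorem image_iterate_subset (hΔ : Δ ⊆ Ω) (hT : MapsTo T Ω Ω) (k : ℕ) :
    S^[k] '' Δ ⊆ T^[k] '' Ω := by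
  rintro _ ⟨z, hz, rfl⟩
  obtain ⟨s, hks, hs⟩ := h.exists_iterate_eq k hz
  have hsk : T^[s] '' Ω ⊆ T^[k] '' Ω := by
    rw [← Nat.sub_add_cancel hks, iterate_add, image_comp]
    exact hT.image_iterate_image_iterate_subset k (s - k)
  exact hsk ⟨z, hΔ hz, hs.symm⟩

theorem exists_iterate_eq_iterate_iterate (r : ℕ) :
    ∀ z ∈ Δ, ∃ k j, j < N ∧ r < (k + 1) * N ∧ T^[r] z = T^[j] (S^[k] z) := by
  induction r using Nat.strong_induction_on with
  | _ r ih =>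
    intro z hz
    obtain ⟨τ, hτ, hτN, hτΔ, hSz⟩ := h z hz
    by_cases hrτ : r < τ
    · exact ⟨0, r, by omega, by omega, rfl⟩
    obtain ⟨k, j, hjN, hrk, hk⟩ := ih (r - τ) (by omega) _ hτΔ
    refine ⟨k + 1, j, hjN, by rw [add_mul]; omega, ?_⟩
    rw [iterate_succ_apply, hSz, ← hk, ← iterate_add_apply, Nat.sub_add_cancel (not_lt.mp hrτ)]

theorem exists_iterate_mem_image {z : α} (hz : z ∈ Δ) {n r : ℕ} (hr : n * N ≤ r) :
    ∃ j, T^[r] z ∈ T^[j] '' (S^[n] '' Δ) := by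
  obtain ⟨k, j, -, hrk, hk⟩ := h.exists_iterate_eq_iterate_iterate r z hz
  have hnk : n ≤ k := Nat.lt_succ_iff.mp (Nat.lt_of_mul_lt_mul_right (hr.trans_lt hrk))
  refine ⟨j, S^[n] (S^[k - n] z), ⟨_, h.mapsTo.iterate _ hz, rfl⟩, ?_⟩
  rw [hk, ← iterate_add_apply, Nat.add_sub_cancel' hnk]

end IsInducedMapWithin

theorem finite_type_of_induced_finite_type_general
    (T : ℝ → ℝ)
    (hmap : Set.MapsTo T (Set.Ico 0 1) (Set.Ico 0 1))
    -- a `T`-regular interval `Δ = [a, b)`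
    (a b : ℝ) (hΔ : Set.Ico a b ⊆ Set.Ico 0 1)
    (N : ℕ)
    (hreg : ∀ x ∈ Set.Ico (0:ℝ) 1, ∃ n : ℕ, 1 ≤ n ∧ n < N ∧ T^[n] x ∈ Set.Ico a b)
    -- the first-return map `T_Δ`
    (TΔ : ℝ → ℝ)
    (hTΔ : ∀ x ∈ Set.Ico a b, ∃ n : ℕ, 1 ≤ n ∧ T^[n] x ∈ Set.Ico a b ∧
      TΔ x = T^[n] x ∧ ∀ m : ℕ, 1 ≤ m → m < n → T^[m] x ∉ Set.Ico a b)
    -- `T_Δ` is of finite type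
    (hfin : ∃ n : ℕ, TΔ^[n + 1] '' Set.Ico a b = TΔ^[n] '' Set.Ico a b) :
    -- then `T` is of finite type
    ∃ n : ℕ, T^[n + 1] '' Set.Ico (0:ℝ) 1 = T^[n] '' Set.Ico (0:ℝ) 1 := by
  have hind : IsInducedMapWithin T TΔ (Ico a b) N := .of_firstReturn hΔ hreg hTΔ
  obtain ⟨n, hn⟩ := hfin
  set m := n * N + N
  refine ⟨m, Subset.antisymm ?_ ?_⟩
  · rw [iterate_succ, image_comp]
    exact image_mono hmap.image_subset
  rintro _ ⟨x, hx, rfl⟩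
  obtain ⟨t, -, htN, htΔ⟩ := hreg x hx
  have htm : t ≤ m := by omega
  have hnm : n ≤ m + 1 := by
    have := Nat.le_mul_of_pos_right n (t.zero_le.trans_lt htN)
    omega
  obtain ⟨j, hj⟩ := hind.exists_iterate_mem_image htΔ (n := n) (r := m - t) (by omega)
  have hstable : TΔ^[n] '' Ico a b = TΔ^[m + 1] '' Ico a b := by
    rw [← image_iterate_add_eq_of_image_iterate_succ_eq hn (m + 1 - n), Nat.sub_add_cancel hnm]
  rw [← iterate_add_apply, Nat.sub_add_cancel htm, hstable] at hj
  exact hmap.image_iterate_image_iterate_subset (m + 1) j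
    (image_mono (hind.image_iterate_subset hΔ hmap (m + 1)) hj)

/-- If `T|X` is transitive and there is a `T`-regular interval `Δ` whose
first-return map `T_Δ` is of finite type, then `T` is of finite type. -/
theorem finite_type_of_induced_finite_type
    (d : ℕ) (hd : 0 < d) (β : Fin (d + 1) → ℝ) (γ : Fin d → ℝ) (T : ℝ → ℝ)
    (hβ : StrictMono β) (hβ0 : β 0 = 0) (hβd : β (Fin.last d) = 1)
    (hT : ∀ i : Fin d, ∀ x ∈ Set.Ico (β i.castSucc) (β i.succ), T x = x + γ i)
    (hmap : Set.MapsTo T (Set.Ico 0 1) (Set.Ico 0 1))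
    -- the limit set `X`: closure of the intersection of the forward images
    (X : Set ℝ)
    (hX : X = closure (⋂ n : ℕ, T^[n + 1] '' Set.Ico 0 1))
    -- `T|X` is transitive: some point of `X` has dense forward orbit in `X`
    (htrans : ∃ x ∈ X, X ⊆ closure {y : ℝ | ∃ n : ℕ, T^[n] x = y})
    -- a `T`-regular interval `Δ = [a, b)`
    (a b : ℝ) (hab : a < b) (hΔ : Set.Ico a b ⊆ Set.Ico 0 1)
    (N : ℕ)
    (hreg : ∀ x ∈ Set.Ico (0:ℝ) 1, ∃ n : ℕ, 1 ≤ n ∧ n < N ∧ T^[n] x ∈ Set.Ico a b)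
    -- the first-return map `T_Δ`
    (TΔ : ℝ → ℝ)
    (hTΔ : ∀ x ∈ Set.Ico a b, ∃ n : ℕ, 1 ≤ n ∧ T^[n] x ∈ Set.Ico a b ∧
      TΔ x = T^[n] x ∧ ∀ m : ℕ, 1 ≤ m → m < n → T^[m] x ∉ Set.Ico a b)
    -- `T_Δ` is of finite type
    (hfin : ∃ n : ℕ, TΔ^[n + 1] '' Set.Ico a b = TΔ^[n] '' Set.Ico a b) :
    -- then `T` is of finite type
    ∃ n : ℕ, T^[n + 1] '' Set.Ico (0:ℝ) 1 = T^[n] '' Set.Ico (0:ℝ) 1 :=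
  finite_type_of_induced_finite_type_general T hmap a b hΔ N hreg TΔ hTΔ hfin
end

section
/- Let T be a tight ITM of three intervals with γ₁ > 0, γ₂ < 0, γ₃ < 0, where T(Δ₁) is rightmost (β₁ + γ₁ = 1), T(Δ₃) is leftmost (β₂ + γ₃ = 0), and |Δ₁| ≥ |Δ₃| (i.e. β₁ ≥ 1 - β₂). Then Δ = Δ₁ ∪ Δ₂ = [0, β₂) is T-regular with return time at most 2: every point of Δ₂ and of Δ₁' = [0, β₂ - γ₁) returns to Δ after one iterate, and every point of Δ₁'' = [β₂ - γ₁, β₁) returns after two iterates via T(Δ₁'') = Δ₃ and T(Δ₃) ⊆ Δ₁. -/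
/-!
On `Δ₁ = [0, β₁)` the map is the translation by `γ₁ = 1 - β₁`, so it carries the right part
`Δ₁'' = [β₂ - γ₁, β₁)` onto `Δ₃ = [β₂, 1)` and the left part `Δ₁' = [0, β₂ - γ₁)` into
`[γ₁, β₂) ⊆ Δ`; the condition `|Δ₁| ≥ |Δ₃|` is exactly `β₂ - γ₁ ≥ 0`. Translation by
`γ₃ = -β₂` carries `Δ₃` to `[0, 1 - β₂) ⊆ Δ₁`, and `Δ₂` moves left
while `T` keeps `[0, 1)` invariant.
-/

open Set

section TranslationOnInterval

variable {M : Type*} [AddCommMonoid M] [PartialOrder M] [IsOrderedCancelAddMonoid M]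
  [ExistsAddOfLE M] {T : M → M} {a b c d γ : M}

theorem image_Ico_of_eqOn_add_const (hT : EqOn T (· + γ) (Ico a b)) :
    T '' Ico a b = Ico (a + γ) (b + γ) := by
  rw [hT.image_eq, image_add_const_Ico]

theorem mapsTo_Ico_of_eqOn_add_const (hT : EqOn T (· + γ) (Ico a b))
    (hc : c ≤ a + γ) (hd : b + γ ≤ d) : MapsTo T (Ico a b) (Ico c d) := by
  rw [mapsTo_iff_image_subset, image_Ico_of_eqOn_add_const hT]
  exact Ico_subset_Ico hc hd

end TranslationOnInterval

theorem caseB_regular_return_two_general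
    (β₁ β₂ γ₁ γ₂ γ₃ : ℝ) (T : ℝ → ℝ)
    (h0 : 0 < β₁) (h1 : β₁ < β₂) (h2 : β₂ < 1)
    (hT1 : ∀ x ∈ Set.Ico (0:ℝ) β₁, T x = x + γ₁)
    (hT2 : ∀ x ∈ Set.Ico β₁ β₂, T x = x + γ₂)
    (hT3 : ∀ x ∈ Set.Ico β₂ (1:ℝ), T x = x + γ₃)
    (hmap : Set.MapsTo T (Set.Ico 0 1) (Set.Ico 0 1))
    (hγ₂ : γ₂ < 0)
    (hright : β₁ + γ₁ = 1) (hleft : β₂ + γ₃ = 0) (hlen : β₁ ≥ 1 - β₂) :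
    -- points of Δ₂ return in one step
    (∀ x ∈ Set.Ico β₁ β₂, T x ∈ Set.Ico (0:ℝ) β₂) ∧
    -- points of Δ₁' = [0, β₂ - γ₁) return in one step
    (∀ x ∈ Set.Ico (0:ℝ) (β₂ - γ₁), T x ∈ Set.Ico (0:ℝ) β₂) ∧
    -- T(Δ₁'') = Δ₃ and T(Δ₃) ⊆ Δ₁, so Δ₁'' returns in two steps
    T '' Set.Ico (β₂ - γ₁) β₁ = Set.Ico β₂ 1 ∧
    T '' Set.Ico β₂ 1 ⊆ Set.Ico 0 β₁ ∧
    (∀ x ∈ Set.Ico (β₂ - γ₁) β₁, T^[2] x ∈ Set.Ico (0:ℝ) β₂) ∧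
    -- every point of [0,1) enters Δ within two iterates
    (∀ x ∈ Set.Ico (0:ℝ) 1, T x ∈ Set.Ico (0:ℝ) β₂ ∨ T^[2] x ∈ Set.Ico (0:ℝ) β₂) := by
  have hΔ₁ : EqOn T (· + γ₁) (Ico 0 β₁) := fun x hx => hT1 x hx
  have hsplit : 0 ≤ β₂ - γ₁ := by linarith
  have hΔ : Ico 0 β₁ ⊆ Ico (0:ℝ) β₂ := Ico_subset_Ico_right h1.le
  have hΔ₂ : MapsTo T (Ico β₁ β₂) (Ico 0 β₂) := fun x hx =>
    ⟨(hmap ⟨h0.le.trans hx.1, hx.2.trans h2⟩).1, by rw [hT2 x hx]; linarith [hx.2]⟩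
  have hΔ₁' : MapsTo T (Ico 0 (β₂ - γ₁)) (Ico 0 β₂) :=
    mapsTo_Ico_of_eqOn_add_const (hΔ₁.mono (Ico_subset_Ico_right (by linarith)))
      (by linarith) (by linarith)
  have hΔ₁'' : T '' Ico (β₂ - γ₁) β₁ = Ico β₂ 1 := by
    rw [image_Ico_of_eqOn_add_const (hΔ₁.mono (Ico_subset_Ico_left hsplit)), sub_add_cancel,
      hright]
  have hΔ₃ : MapsTo T (Ico β₂ 1) (Ico 0 β₁) :=
    mapsTo_Ico_of_eqOn_add_const (fun x hx => hT3 x hx) (by linarith) (by linarith)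
  have hΔ₁''_two : MapsTo T^[2] (Ico (β₂ - γ₁) β₁) (Ico 0 β₂) :=
    (hΔ₃.comp (mapsTo_iff_image_subset.2 hΔ₁''.subset)).mono_right hΔ
  refine ⟨hΔ₂, hΔ₁', hΔ₁'', hΔ₃.image_subset, hΔ₁''_two, fun x ⟨hx0, hx1⟩ => ?_⟩
  rcases lt_or_ge x (β₂ - γ₁) with h | h
  · exact .inl (hΔ₁' ⟨hx0, h⟩)
  rcases lt_or_ge x β₁ with h' | h'
  · exact .inr (hΔ₁''_two ⟨h, h'⟩)
  rcases lt_or_ge x β₂ with h'' | h''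
  · exact .inl (hΔ₂ ⟨h', h''⟩)
  · exact .inl (hΔ (hΔ₃ ⟨h'', hx1⟩))

/-- Case B: for a tight ITM of three intervals with `γ₁ > 0`, `γ₂ < 0`,
`γ₃ < 0`, `β₁ + γ₁ = 1`, `β₂ + γ₃ = 0`, `β₁ ≥ 1 - β₂`, the interval
`Δ = Δ₁ ∪ Δ₂ = [0, β₂)` is regular with return time at most 2. -/
theorem caseB_regular_return_two
    (β₁ β₂ γ₁ γ₂ γ₃ : ℝ) (T : ℝ → ℝ)
    (h0 : 0 < β₁) (h1 : β₁ < β₂) (h2 : β₂ < 1)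
    (hT1 : ∀ x ∈ Set.Ico (0:ℝ) β₁, T x = x + γ₁)
    (hT2 : ∀ x ∈ Set.Ico β₁ β₂, T x = x + γ₂)
    (hT3 : ∀ x ∈ Set.Ico β₂ (1:ℝ), T x = x + γ₃)
    (hmap : Set.MapsTo T (Set.Ico 0 1) (Set.Ico 0 1))
    (hγ₁ : 0 < γ₁) (hγ₂ : γ₂ < 0) (hγ₃ : γ₃ < 0)
    (hright : β₁ + γ₁ = 1) (hleft : β₂ + γ₃ = 0) (hlen : β₁ ≥ 1 - β₂) :
    -- points of Δ₂ return in one step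
    (∀ x ∈ Set.Ico β₁ β₂, T x ∈ Set.Ico (0:ℝ) β₂) ∧
    -- points of Δ₁' = [0, β₂ - γ₁) return in one step
    (∀ x ∈ Set.Ico (0:ℝ) (β₂ - γ₁), T x ∈ Set.Ico (0:ℝ) β₂) ∧
    -- T(Δ₁'') = Δ₃ and T(Δ₃) ⊆ Δ₁, so Δ₁'' returns in two steps
    T '' Set.Ico (β₂ - γ₁) β₁ = Set.Ico β₂ 1 ∧
    T '' Set.Ico β₂ 1 ⊆ Set.Ico 0 β₁ ∧
    (∀ x ∈ Set.Ico (β₂ - γ₁) β₁, T^[2] x ∈ Set.Ico (0:ℝ) β₂) ∧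
    -- every point of [0,1) enters Δ within two iterates
    (∀ x ∈ Set.Ico (0:ℝ) 1, T x ∈ Set.Ico (0:ℝ) β₂ ∨ T^[2] x ∈ Set.Ico (0:ℝ) β₂) :=
  caseB_regular_return_two_general β₁ β₂ γ₁ γ₂ γ₃ T h0 h1 h2 hT1 hT2 hT3 hmap hγ₂ hright hleft hlen
end

section
/- Let T be a tight ITM of three intervals with γ₁ > 0, γ₂ > 0, γ₃ < 0, β₁ + γ₁ = 1 (Δ₁ goes rightmost), β₂ + γ₃ = 0 (Δ₃ goes leftmost), and β₁ ≥ 1 - β₂. Then T(Δ₂) ⊆ Δ := Δ₂ ∪ Δ₃ = [β₁, 1), and T(Δ₃) ⊆ Δ₁; moreover, as long as iterates of T(Δ₃) stay inside Δ₁, they are translated by γ₁ each step: if T²(Δ₃), ..., Tⁿ(Δ₃) ⊆ Δ₁ then Tⁿ(Δ₃) = T(Δ₃) + (n-1)γ₁. -/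
/-!
On `Δ₃ = [β₂, 1)` the map is the translation by `γ₃`, and `β₂ + γ₃ = 0` together with
`1 - β₂ ≤ β₁` puts `T(Δ₃)` inside `Δ₁ = [0, β₁)`. On `Δ₁` the map is the translation by `γ₁`,
so as long as the orbit of `T(Δ₃)` stays in `Δ₁`, each further step of `T` just shifts it by `γ₁`.
-/

theorem Set.image_iterate_eq_image_add_nsmul {G : Type*} [AddMonoid G] {T : G → G}
    {A S : Set G} {c : G} (hT : ∀ x ∈ A, T x = x + c) {n : ℕ}
    (hS : ∀ k < n, T^[k] '' S ⊆ A) :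
    T^[n] '' S = (· + n • c) '' S := by
  induction n with
  | zero => simp
  | succ n ih =>
    calc T^[n + 1] '' S = T '' (T^[n] '' S) := by
          rw [Function.iterate_succ', Set.image_comp]
      _ = (· + c) '' (T^[n] '' S) := Set.image_congr fun x hx => hT x (hS n n.lt_succ_self hx)
      _ = (· + (n + 1) • c) '' S := by
          rw [ih fun k hk => hS k (Nat.lt_succ_of_lt hk), Set.image_image, succ_nsmul]
          simp only [add_assoc]

theorem caseC_iterates_general
    (β₁ β₂ γ₁ γ₂ γ₃ : ℝ) (T : ℝ → ℝ)
    (h0 : 0 < β₁) (h2 : β₂ < 1)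
    (hT1 : ∀ x ∈ Set.Ico (0:ℝ) β₁, T x = x + γ₁)
    (hT2 : ∀ x ∈ Set.Ico β₁ β₂, T x = x + γ₂)
    (hT3 : ∀ x ∈ Set.Ico β₂ (1:ℝ), T x = x + γ₃)
    (hmap : Set.MapsTo T (Set.Ico 0 1) (Set.Ico 0 1))
    (hγ₂ : 0 < γ₂)
    (hleft : β₂ + γ₃ = 0) (hlen : β₁ ≥ 1 - β₂) :
    T '' Set.Ico β₁ β₂ ⊆ Set.Ico β₁ 1 ∧
    T '' Set.Ico β₂ 1 ⊆ Set.Ico 0 β₁ ∧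
    ∀ n : ℕ, 1 ≤ n →
      (∀ m : ℕ, 2 ≤ m → m ≤ n → T^[m] '' Set.Ico β₂ 1 ⊆ Set.Ico 0 β₁) →
      T^[n] '' Set.Ico β₂ 1 = (fun x => x + (n - 1 : ℕ) * γ₁) '' (T '' Set.Ico β₂ 1) := by
  have hΔ₂ : T '' Set.Ico β₁ β₂ ⊆ Set.Ico β₁ 1 := by
    rintro _ ⟨x, hx, rfl⟩
    have hx01 : x ∈ Set.Ico (0:ℝ) 1 := ⟨by linarith [hx.1], by linarith [hx.2]⟩
    exact ⟨by linarith [hT2 x hx, hx.1], (hmap hx01).2⟩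
  have hΔ₃ : T '' Set.Ico β₂ 1 ⊆ Set.Ico 0 β₁ := by
    rintro _ ⟨x, hx, rfl⟩
    rw [hT3 x hx]
    exact ⟨by linarith [hx.1], by linarith [hx.2]⟩
  refine ⟨hΔ₂, hΔ₃, fun n hn hstay => ?_⟩
  obtain ⟨m, rfl⟩ : ∃ m, n = m + 1 := ⟨n - 1, by omega⟩
  have horbit : ∀ k < m, T^[k] '' (T '' Set.Ico β₂ 1) ⊆ Set.Ico 0 β₁ := by
    rintro (_ | k) hk
    · simpa using hΔ₃
    · rw [← Set.image_comp, ← Function.iterate_succ]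
      exact hstay (k + 2) (by omega) (by omega)
  rw [Function.iterate_succ, Set.image_comp, Set.image_iterate_eq_image_add_nsmul hT1 horbit]
  simp [nsmul_eq_mul]

/-- Case C setup: for a tight ITM of three intervals with `γ₁, γ₂ > 0 > γ₃`,
`β₁ + γ₁ = 1`, `β₂ + γ₃ = 0`, `β₁ ≥ 1 - β₂`: `T(Δ₂) ⊆ Δ = [β₁, 1)`,
`T(Δ₃) ⊆ Δ₁`, and while iterates of `T(Δ₃)` stay in `Δ₁` they are translated
by `γ₁` each step. -/
theorem caseC_iterates
    (β₁ β₂ γ₁ γ₂ γ₃ : ℝ) (T : ℝ → ℝ)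
    (h0 : 0 < β₁) (h1 : β₁ < β₂) (h2 : β₂ < 1)
    (hT1 : ∀ x ∈ Set.Ico (0:ℝ) β₁, T x = x + γ₁)
    (hT2 : ∀ x ∈ Set.Ico β₁ β₂, T x = x + γ₂)
    (hT3 : ∀ x ∈ Set.Ico β₂ (1:ℝ), T x = x + γ₃)
    (hmap : Set.MapsTo T (Set.Ico 0 1) (Set.Ico 0 1))
    (hγ₁ : 0 < γ₁) (hγ₂ : 0 < γ₂) (hγ₃ : γ₃ < 0)
    (hright : β₁ + γ₁ = 1) (hleft : β₂ + γ₃ = 0) (hlen : β₁ ≥ 1 - β₂) :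
    T '' Set.Ico β₁ β₂ ⊆ Set.Ico β₁ 1 ∧
    T '' Set.Ico β₂ 1 ⊆ Set.Ico 0 β₁ ∧
    ∀ n : ℕ, 1 ≤ n →
      (∀ m : ℕ, 2 ≤ m → m ≤ n → T^[m] '' Set.Ico β₂ 1 ⊆ Set.Ico 0 β₁) →
      T^[n] '' Set.Ico β₂ 1 = (fun x => x + (n - 1 : ℕ) * γ₁) '' (T '' Set.Ico β₂ 1) :=
  caseC_iterates_general β₁ β₂ γ₁ γ₂ γ₃ T h0 h2 hT1 hT2 hT3 hmap hγ₂ hleft hlen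
end

section
/- Let T be a tight ITM of three intervals with γ₁ > 0, γ₂ > 0, γ₃ < 0, β₁ + γ₁ = 1, β₂ + γ₃ = 0, β₁ ≥ 1 - β₂. Then the interval Δ = [β₁, 1) is T-regular: there exists N such that every point of [0,1) enters Δ within fewer than N iterates of T. -/
/-!
Points of `[0, β₁)` are translated to the right by `γ₁` until they leave `[0, β₁)`; since
`β₁ + γ₁ = 1` they then land in `[β₁, 1)`, after at most `M` steps where `β₁ ≤ M γ₁`.
Points of `[β₁, β₂)` move right and stay in `[0, 1)`, so they are in `[β₁, 1)` after one step.
Points of `[β₂, 1)` are sent by `γ₃ = -β₂` into `[0, 1 - β₂) ⊆ [0, β₁)`, and then climb as above.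
-/

open Set

theorem exists_iterate_mem_Ico_of_eq_add {T : ℝ → ℝ} {a b c γ : ℝ}
    (hT : ∀ x ∈ Ico a b, T x = x + γ) (hγ : 0 ≤ γ) (hc : b + γ ≤ c) :
    ∀ (m : ℕ), ∀ y ∈ Ico a b, b ≤ y + m * γ →
      ∃ k, 1 ≤ k ∧ k ≤ m ∧ T^[k] y ∈ Ico b c := by
  intro m
  induction m with
  | zero =>
    rintro y ⟨-, hyb⟩ hm
    simp only [CharP.cast_eq_zero, zero_mul, add_zero] at hm
    linarith
  | succ m ih =>
    rintro y ⟨hay, hyb⟩ hm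
    have hTy : T y = y + γ := hT y ⟨hay, hyb⟩
    by_cases hexit : b ≤ y + γ
    · exact ⟨1, le_rfl, by omega, by simpa [hTy] using ⟨hexit, by linarith⟩⟩
    · obtain ⟨k, hk1, hkm, hk⟩ :=
        ih (y + γ) ⟨by linarith, not_le.mp hexit⟩ (by push_cast at hm; linarith)
      exact ⟨k + 1, by omega, by omega, by rwa [Function.iterate_succ_apply, hTy]⟩

theorem caseC_regular_general
    (β₁ β₂ γ₁ γ₂ γ₃ : ℝ) (T : ℝ → ℝ)
    (hT1 : ∀ x ∈ Set.Ico (0:ℝ) β₁, T x = x + γ₁)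
    (hT2 : ∀ x ∈ Set.Ico β₁ β₂, T x = x + γ₂)
    (hT3 : ∀ x ∈ Set.Ico β₂ (1:ℝ), T x = x + γ₃)
    (hmap : Set.MapsTo T (Set.Ico 0 1) (Set.Ico 0 1))
    (hγ₁ : 0 < γ₁) (hγ₂ : 0 < γ₂)
    (hright : β₁ + γ₁ = 1) (hleft : β₂ + γ₃ = 0) (hlen : β₁ ≥ 1 - β₂) :
    ∃ N : ℕ, ∀ x ∈ Set.Ico (0:ℝ) 1, ∃ n : ℕ, 1 ≤ n ∧ n < N ∧
      T^[n] x ∈ Set.Ico β₁ 1 := by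
  obtain ⟨M, hM⟩ := Archimedean.arch β₁ hγ₁
  rw [nsmul_eq_mul] at hM
  have climb := exists_iterate_mem_Ico_of_eq_add hT1 hγ₁.le hright.le M
  refine ⟨M + 2, fun x hx => ?_⟩
  rcases lt_or_ge x β₁ with hxβ₁ | hβ₁x
  · obtain ⟨k, hk1, hkM, hk⟩ := climb x ⟨hx.1, hxβ₁⟩ (by linarith [hx.1])
    exact ⟨k, hk1, by omega, hk⟩
  rcases lt_or_ge x β₂ with hxβ₂ | hβ₂x
  · have hTx : T x = x + γ₂ := hT2 x ⟨hβ₁x, hxβ₂⟩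
    exact ⟨1, le_rfl, by omega, show β₁ ≤ T x by linarith, (hmap hx).2⟩
  · have hTx : T x = x + γ₃ := hT3 x ⟨hβ₂x, hx.2⟩
    obtain ⟨k, hk1, hkM, hk⟩ :=
      climb (T x) ⟨by linarith, by linarith [hx.2]⟩ (by linarith)
    exact ⟨k + 1, by omega, by omega, by rwa [Function.iterate_succ_apply]⟩

/-- Case C: the interval `Δ = [β₁, 1)` is `T`-regular. -/
theorem caseC_regular
    (β₁ β₂ γ₁ γ₂ γ₃ : ℝ) (T : ℝ → ℝ)
    (h0 : 0 < β₁) (h1 : β₁ < β₂) (h2 : β₂ < 1)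
    (hT1 : ∀ x ∈ Set.Ico (0:ℝ) β₁, T x = x + γ₁)
    (hT2 : ∀ x ∈ Set.Ico β₁ β₂, T x = x + γ₂)
    (hT3 : ∀ x ∈ Set.Ico β₂ (1:ℝ), T x = x + γ₃)
    (hmap : Set.MapsTo T (Set.Ico 0 1) (Set.Ico 0 1))
    (hγ₁ : 0 < γ₁) (hγ₂ : 0 < γ₂) (hγ₃ : γ₃ < 0)
    (hright : β₁ + γ₁ = 1) (hleft : β₂ + γ₃ = 0) (hlen : β₁ ≥ 1 - β₂) :
    ∃ N : ℕ, ∀ x ∈ Set.Ico (0:ℝ) 1, ∃ n : ℕ, 1 ≤ n ∧ n < N ∧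
      T^[n] x ∈ Set.Ico β₁ 1 :=
  caseC_regular_general β₁ β₂ γ₁ γ₂ γ₃ T hT1 hT2 hT3 hmap hγ₁ hγ₂ hright hleft hlen
end

section
/- Let T be a tight ITM of three intervals with γ₁ > 0, γ₂ > 0, γ₃ < 0, β₁ + γ₁ = 1, β₂ + γ₃ = 0, β₁ ≥ 1 - β₂, and suppose there exists n ≥ 1 with T²(Δ₃), ..., Tⁿ(Δ₃) ⊆ Δ₁ and Tⁿ⁺¹(Δ₃) ⊆ Δ = [β₁, 1). Then the first-return map T_Δ is an ITM of two intervals on Δ (Δ₂ returning in one step with translation γ₂, Δ₃ returning in n+1 steps with translation γ₃ + n·γ₁). -/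
/-!
A point of `Δ₂` is moved by `γ₂` straight into `Δ`. A point of `Δ₃` is moved by `γ₃` into
`Δ₁`, its orbit stays in `Δ₁` up to time `n` (each step adding `γ₁`) and enters `Δ` at time
`n + 1`; as `Δ₁` and `Δ` are disjoint, `n + 1` is the first return time.
-/

open Set

section FirstReturn

variable {α : Type*} {f : α → α} {s : Set α} {x : α}

def IsFirstReturnTime (f : α → α) (s : Set α) (x : α) (m : ℕ) : Prop :=
  1 ≤ m ∧ f^[m] x ∈ s ∧ ∀ l, 1 ≤ l → l < m → f^[l] x ∉ s

theorem IsFirstReturnTime.unique {m m' : ℕ} (h : IsFirstReturnTime f s x m)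
    (h' : IsFirstReturnTime f s x m') : m = m' := by
  rcases lt_trichotomy m m' with hlt | heq | hgt
  · exact absurd h.2.1 (h'.2.2 m h.1 hlt)
  · exact heq
  · exact absurd h'.2.1 (h.2.2 m' h'.1 hgt)

theorem firstReturn_eq_iterate {g : α → α} {m₀ : ℕ}
    (hg : ∃ m : ℕ, 1 ≤ m ∧ f^[m] x ∈ s ∧ g x = f^[m] x ∧ ∀ l : ℕ, 1 ≤ l → l < m → f^[l] x ∉ s)
    (h₀ : IsFirstReturnTime f s x m₀) : g x = f^[m₀] x := by
  obtain ⟨m, hm, hms, hgm, hmin⟩ := hg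
  rw [hgm, IsFirstReturnTime.unique ⟨hm, hms, hmin⟩ h₀]

end FirstReturn

section ThreeIntervals

variable {β₁ β₂ γ₁ γ₃ : ℝ} {T : ℝ → ℝ} {n : ℕ} {x : ℝ}

theorem iterate_succ_eq_of_iterate_mem_Ico (hT1 : ∀ y ∈ Ico (0:ℝ) β₁, T y = y + γ₁)
    (hx : T x = x + γ₃) (horbit : ∀ j, 1 ≤ j → j ≤ n → T^[j] x ∈ Ico 0 β₁) :
    ∀ j ≤ n, T^[j + 1] x = x + (γ₃ + j * γ₁) := by
  intro j hj
  induction j with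
  | zero => simp [hx]
  | succ j ih =>
    rw [Function.iterate_succ_apply', hT1 _ (horbit (j + 1) (by omega) hj), ih (by omega)]
    push_cast
    ring

theorem iterate_mem_Ico_of_mem_Ico (hT3 : ∀ y ∈ Ico β₂ (1:ℝ), T y = y + γ₃)
    (hleft : β₂ + γ₃ = 0) (hlen : β₁ ≥ 1 - β₂)
    (hin : ∀ m : ℕ, 2 ≤ m → m ≤ n → T^[m] '' Ico β₂ 1 ⊆ Ico 0 β₁) (hx : x ∈ Ico β₂ 1) :
    ∀ j, 1 ≤ j → j ≤ n → T^[j] x ∈ Ico 0 β₁ := by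
  intro j hj hjn
  obtain rfl | hj2 := eq_or_lt_of_le hj
  · rw [Function.iterate_one, hT3 x hx]
    constructor <;> linarith [hx.1, hx.2]
  · exact hin j hj2 hjn ⟨x, hx, rfl⟩

end ThreeIntervals

theorem possibilityB_induced_two_itm_general
    (β₁ β₂ γ₁ γ₂ γ₃ : ℝ) (T : ℝ → ℝ)
    (h0 : 0 < β₁) (h1 : β₁ < β₂) (h2 : β₂ < 1)
    (hT1 : ∀ x ∈ Set.Ico (0:ℝ) β₁, T x = x + γ₁)
    (hT2 : ∀ x ∈ Set.Ico β₁ β₂, T x = x + γ₂)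
    (hT3 : ∀ x ∈ Set.Ico β₂ (1:ℝ), T x = x + γ₃)
    (hmap : Set.MapsTo T (Set.Ico 0 1) (Set.Ico 0 1))
    (hγ₂ : 0 < γ₂)
    (hleft : β₂ + γ₃ = 0) (hlen : β₁ ≥ 1 - β₂)
    (n : ℕ)
    (hin : ∀ m : ℕ, 2 ≤ m → m ≤ n → T^[m] '' Set.Ico β₂ 1 ⊆ Set.Ico 0 β₁)
    (hout : T^[n + 1] '' Set.Ico β₂ 1 ⊆ Set.Ico β₁ 1)
    -- the first-return map to Δ = [β₁, 1)
    (TΔ : ℝ → ℝ)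
    (hTΔ : ∀ x ∈ Set.Ico β₁ (1:ℝ), ∃ m : ℕ, 1 ≤ m ∧ T^[m] x ∈ Set.Ico β₁ 1 ∧
      TΔ x = T^[m] x ∧ ∀ l : ℕ, 1 ≤ l → l < m → T^[l] x ∉ Set.Ico β₁ 1) :
    (∀ x ∈ Set.Ico β₁ β₂, TΔ x = x + γ₂) ∧
    (∀ x ∈ Set.Ico β₂ (1:ℝ), TΔ x = T^[n + 1] x ∧ TΔ x = x + (γ₃ + n * γ₁)) := by
  constructor
  · intro x hx
    have hTx : T x = x + γ₂ := hT2 x hx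
    have hTx_mem : T x ∈ Ico β₁ 1 :=
      ⟨by linarith [hx.1], (hmap ⟨h0.le.trans hx.1, hx.2.trans h2⟩).2⟩
    have hret := firstReturn_eq_iterate (hTΔ x ⟨hx.1, hx.2.trans h2⟩) (m₀ := 1)
      ⟨le_rfl, by simpa using hTx_mem, fun l hl hl1 => absurd hl1 (not_lt.2 hl)⟩
    simpa [hTx] using hret
  · intro x hx
    have horbit := iterate_mem_Ico_of_mem_Ico hT3 hleft hlen hin hx
    have hret : TΔ x = T^[n + 1] x :=
      firstReturn_eq_iterate (hTΔ x ⟨h1.le.trans hx.1, hx.2⟩)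
        ⟨by omega, hout ⟨x, hx, rfl⟩,
          fun l hl hln hmem => (horbit l hl (by omega)).2.not_ge hmem.1⟩
    exact ⟨hret, hret.trans
      (iterate_succ_eq_of_iterate_mem_Ico hT1 (hT3 x hx) horbit n le_rfl)⟩

/-- Possibility B_n: if `T²(Δ₃), …, Tⁿ(Δ₃) ⊆ Δ₁` and `Tⁿ⁺¹(Δ₃) ⊆ Δ = [β₁,1)`,
then the first-return map `T_Δ` is an ITM of two intervals on `Δ`: it
translates `Δ₂` by `γ₂` (return in one step) and `Δ₃` by `γ₃ + n·γ₁`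
(return in `n+1` steps). -/
theorem possibilityB_induced_two_itm
    (β₁ β₂ γ₁ γ₂ γ₃ : ℝ) (T : ℝ → ℝ)
    (h0 : 0 < β₁) (h1 : β₁ < β₂) (h2 : β₂ < 1)
    (hT1 : ∀ x ∈ Set.Ico (0:ℝ) β₁, T x = x + γ₁)
    (hT2 : ∀ x ∈ Set.Ico β₁ β₂, T x = x + γ₂)
    (hT3 : ∀ x ∈ Set.Ico β₂ (1:ℝ), T x = x + γ₃)
    (hmap : Set.MapsTo T (Set.Ico 0 1) (Set.Ico 0 1))
    (hγ₁ : 0 < γ₁) (hγ₂ : 0 < γ₂) (hγ₃ : γ₃ < 0)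
    (hright : β₁ + γ₁ = 1) (hleft : β₂ + γ₃ = 0) (hlen : β₁ ≥ 1 - β₂)
    (n : ℕ) (hn : 1 ≤ n)
    (hin : ∀ m : ℕ, 2 ≤ m → m ≤ n → T^[m] '' Set.Ico β₂ 1 ⊆ Set.Ico 0 β₁)
    (hout : T^[n + 1] '' Set.Ico β₂ 1 ⊆ Set.Ico β₁ 1)
    -- the first-return map to Δ = [β₁, 1)
    (TΔ : ℝ → ℝ)
    (hTΔ : ∀ x ∈ Set.Ico β₁ (1:ℝ), ∃ m : ℕ, 1 ≤ m ∧ T^[m] x ∈ Set.Ico β₁ 1 ∧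
      TΔ x = T^[m] x ∧ ∀ l : ℕ, 1 ≤ l → l < m → T^[l] x ∉ Set.Ico β₁ 1) :
    (∀ x ∈ Set.Ico β₁ β₂, TΔ x = x + γ₂) ∧
    (∀ x ∈ Set.Ico β₂ (1:ℝ), TΔ x = T^[n + 1] x ∧ TΔ x = x + (γ₃ + n * γ₁)) :=
  possibilityB_induced_two_itm_general β₁ β₂ γ₁ γ₂ γ₃ T h0 h1 h2 hT1 hT2 hT3 hmap hγ₂ hleft hlen n
    hin hout TΔ hTΔ
end

section
/- Let T be a tight ITM of three intervals with γ₁ > 0, γ₂ > 0, γ₃ < 0, β₁ + γ₁ = 1, β₂ + γ₃ = 0, β₁ ≥ 1 - β₂, and suppose for some n ≥ 1: T²(Δ₃),...,Tⁿ(Δ₃) ⊆ Δ₁, Tⁿ⁺¹(Δ₃) ∩ [β₁,1) ≠ ∅ but Tⁿ⁺¹(Δ₃) ⊄ [β₁,1). Let Δ₃' = {x ∈ Δ₃ : Tⁿ⁺¹(x) < β₁} and Δ₃'' = {x ∈ Δ₃ : Tⁿ⁺¹(x) ≥ β₁}. Then Δ₃' and Δ₃'' are half-open intervals with Δ₃'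 to the left of Δ₃''; Δ₃'' returns to Δ = [β₁,1) after n+1 iterations landing at the leftmost position of Δ, and Δ₃' returns after n+2 iterations landing at the rightmost position of Δ. -/
/-!
On `Δ₃ = [β₂, 1)` the map `T` is the translation by `γ₃ = -β₂`, which lands in
`[0, 1 - β₂) ⊆ Δ₁`; by hypothesis the orbit then stays in `Δ₁` up to time `n`, where `T` is the
translation by `γ₁`. So `Tⁿ⁺¹` is the translation by `c = γ₃ + n γ₁` on all of `Δ₃`, and the
split point is `s = β₁ - c`: `Tⁿ⁺¹ [s, 1)` starts exactly at `β₁`, while `Tⁿ⁺¹ [β₂, s)` lies in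
`Δ₁` and ends at `β₁`, so one more translation by `γ₁ = 1 - β₁` makes it end exactly at `1`.
-/

open Set Function

theorem iterate_eq_add_nsmul_of_forall_iterate_mem {M : Type*} [AddMonoid M] {f : M → M}
    {S : Set M} {a : M} (hf : ∀ x ∈ S, f x = x + a) {x : M} {k : ℕ}
    (hx : ∀ m < k, f^[m] x ∈ S) : f^[k] x = x + k • a := by
  induction k with
  | zero => simp
  | succ k ih =>
    rw [iterate_succ_apply', hf _ (hx k k.lt_succ_self),
      ih fun m hm => hx m (hm.trans k.lt_succ_self), succ_nsmul, add_assoc]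

theorem Set.EqOn.comp_add {M : Type*} [AddSemigroup M] {f g : M → M} {s t : Set M}
    {c d : M} (hg : EqOn g (· + c) s)
    (hf : ∀ x ∈ t, f x = x + d) (hst : MapsTo g s t) : EqOn (f ∘ g) (· + (c + d)) s :=
  fun x hx => by rw [comp_apply, hf _ (hst hx), hg hx, add_assoc]

section Translation

variable {α : Type*} [AddCommGroup α] [LinearOrder α] [IsOrderedAddMonoid α]
  {g : α → α} {a b c t : α}

theorem sep_Ico_lt_eq_Ico_of_eqOn_add (hg : EqOn g (· + c) (Ico a b)) (ht : t - c ≤ b) :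
    {x ∈ Ico a b | g x < t} = Ico a (t - c) := by
  ext x
  simp only [mem_Ico, lt_sub_iff_add_lt]
  constructor
  · rintro ⟨hx, hgx⟩
    exact ⟨hx.1, by rwa [hg hx] at hgx⟩
  · rintro ⟨hax, hxt⟩
    have hx : x ∈ Ico a b := ⟨hax, (lt_sub_iff_add_lt.2 hxt).trans_le ht⟩
    exact ⟨hx, by rwa [hg hx]⟩

theorem sep_Ico_le_eq_Ico_of_eqOn_add (hg : EqOn g (· + c) (Ico a b)) (ht : a ≤ t - c) :
    {x ∈ Ico a b | t ≤ g x} = Ico (t - c) b := by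
  ext x
  simp only [mem_Ico, sub_le_iff_le_add]
  constructor
  · rintro ⟨hx, hgx⟩
    exact ⟨by rwa [hg hx] at hgx, hx.2⟩
  · rintro ⟨htx, hxb⟩
    have hx : x ∈ Ico a b := ⟨ht.trans (sub_le_iff_le_add.2 htx), hxb⟩
    exact ⟨hx, by rwa [hg hx]⟩

theorem image_Ico_of_eqOn_add (hg : EqOn g (· + c) (Ico a b)) :
    g '' Ico a b = Ico (a + c) (b + c) := by
  rw [hg.image_eq, image_add_const_Ico]

end Translation

theorem iterate_succ_eq_add_of_mem_Ico {β₁ β₂ γ₁ γ₃ : ℝ} {T : ℝ → ℝ} {n : ℕ}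
    (hT1 : ∀ x ∈ Ico (0:ℝ) β₁, T x = x + γ₁) (hT3 : ∀ x ∈ Ico β₂ (1:ℝ), T x = x + γ₃)
    (hleft : β₂ + γ₃ = 0) (hlen : β₁ ≥ 1 - β₂)
    (hin : ∀ m : ℕ, 2 ≤ m → m ≤ n → T^[m] '' Ico β₂ 1 ⊆ Ico 0 β₁) :
    EqOn T^[n + 1] (· + (γ₃ + n * γ₁)) (Ico β₂ 1) := by
  intro x hx
  have horbit : ∀ m < n, T^[m] (T x) ∈ Ico 0 β₁ := by
    rintro (_ | m) hm
    · rw [iterate_zero_apply, hT3 x hx]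
      constructor <;> linarith [hx.1, hx.2]
    · rw [← iterate_succ_apply]
      exact hin (m + 2) le_add_self hm (mem_image_of_mem _ hx)
  rw [iterate_succ_apply, iterate_eq_add_nsmul_of_forall_iterate_mem hT1 horbit, hT3 x hx,
    nsmul_eq_mul, add_assoc]

theorem image_iterate_succ_Ico_eq {β₁ β₂ γ₁ c : ℝ} {T : ℝ → ℝ} {k : ℕ}
    (hT1 : ∀ x ∈ Ico (0:ℝ) β₁, T x = x + γ₁) (hright : β₁ + γ₁ = 1)
    (hk : EqOn T^[k] (· + c) (Ico β₂ (β₁ - c))) (hc : 0 ≤ β₂ + c) :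
    T^[k + 1] '' Ico β₂ (β₁ - c) = Ico (β₂ + (c + γ₁)) 1 := by
  have himg : T^[k] '' Ico β₂ (β₁ - c) = Ico (β₂ + c) β₁ := by
    rw [image_Ico_of_eqOn_add hk, sub_add_cancel]
  have hk' : EqOn T^[k + 1] (· + (c + γ₁)) (Ico β₂ (β₁ - c)) := by
    rw [iterate_succ']
    exact hk.comp_add hT1 (mapsTo_iff_image_subset.2 (himg ▸ Ico_subset_Ico_left hc))
  rw [image_Ico_of_eqOn_add hk', show β₁ - c + (c + γ₁) = 1 by linarith]

theorem possibilityC_split_general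
    (β₁ β₂ γ₁ γ₃ : ℝ) (T : ℝ → ℝ)
    (h1 : β₁ < β₂)
    (hT1 : ∀ x ∈ Set.Ico (0:ℝ) β₁, T x = x + γ₁)
    (hT3 : ∀ x ∈ Set.Ico β₂ (1:ℝ), T x = x + γ₃)
    (hmap : Set.MapsTo T (Set.Ico 0 1) (Set.Ico 0 1))
    (hright : β₁ + γ₁ = 1) (hleft : β₂ + γ₃ = 0) (hlen : β₁ ≥ 1 - β₂)
    (n : ℕ)
    (hin : ∀ m : ℕ, 2 ≤ m → m ≤ n → T^[m] '' Set.Ico β₂ 1 ⊆ Set.Ico 0 β₁)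
    (hmeet : ∃ x ∈ Set.Ico β₂ (1:ℝ), T^[n + 1] x ∈ Set.Ico β₁ 1)
    (hnotin : ∃ x ∈ Set.Ico β₂ (1:ℝ), T^[n + 1] x ∉ Set.Ico β₁ 1) :
    ∃ s : ℝ, β₂ < s ∧ s < 1 ∧
      {x ∈ Set.Ico β₂ (1:ℝ) | T^[n + 1] x < β₁} = Set.Ico β₂ s ∧
      {x ∈ Set.Ico β₂ (1:ℝ) | β₁ ≤ T^[n + 1] x} = Set.Ico s 1 ∧
      T^[n + 1] '' Set.Ico s 1 ⊆ Set.Ico β₁ 1 ∧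
      sInf (T^[n + 1] '' Set.Ico s 1) = β₁ ∧
      T^[n + 2] '' Set.Ico β₂ s ⊆ Set.Ico β₁ 1 ∧
      sSup (closure (T^[n + 2] '' Set.Ico β₂ s)) = 1 := by
  set c := γ₃ + n * γ₁
  have hΔ₃ : EqOn T^[n + 1] (· + c) (Ico β₂ 1) :=
    iterate_succ_eq_add_of_mem_Ico hT1 hT3 hleft hlen hin
  have hΔ₃_lt_one : ∀ x ∈ Ico β₂ 1, T^[n + 1] x < 1 :=
    fun x hx => (hmap.iterate _ (Ico_subset_Ico_left (by linarith) hx)).2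
  obtain ⟨x₀, hx₀, hx₀T⟩ := hmeet
  obtain ⟨x₁, hx₁, hx₁T⟩ := hnotin
  have hx₁T' : T^[n + 1] x₁ < β₁ := lt_of_not_ge fun h => hx₁T ⟨h, hΔ₃_lt_one x₁ hx₁⟩
  rw [hΔ₃ hx₀] at hx₀T
  rw [hΔ₃ hx₁] at hx₁T'
  have hs_lt_one : β₁ - c < 1 := by linarith [hx₀.2, hx₀T.1]
  have hβ₂_lt_s : β₂ < β₁ - c := by linarith [hx₁.1]
  have hle := sep_Ico_le_eq_Ico_of_eqOn_add hΔ₃ hβ₂_lt_s.le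
  have hlt := sep_Ico_lt_eq_Ico_of_eqOn_add hΔ₃ hs_lt_one.le
  have himg₂ := image_iterate_succ_Ico_eq hT1 hright (hΔ₃.mono (Ico_subset_Ico_right hs_lt_one.le))
    (by linarith)
  refine ⟨β₁ - c, hβ₂_lt_s, hs_lt_one, hlt, hle, ?_, ?_, ?_, ?_⟩
  · rintro _ ⟨x, hx, rfl⟩
    rw [← hle] at hx
    exact ⟨hx.2, hΔ₃_lt_one x hx.1⟩
  · rw [image_Ico_of_eqOn_add (hΔ₃.mono (Ico_subset_Ico_left hβ₂_lt_s.le)), sub_add_cancel]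
    exact csInf_Ico (by linarith)
  · rw [himg₂]
    exact Ico_subset_Ico_left (by linarith)
  · rw [himg₂, closure_Ico (by linarith), csSup_Icc (by linarith)]

/-- Possibility C_n: if `T²(Δ₃), …, Tⁿ(Δ₃) ⊆ Δ₁` while `Tⁿ⁺¹(Δ₃)` meets
`Δ = [β₁,1)` but is not contained in it, then `Δ₃` splits into two half-open
intervals `Δ₃'` (left) and `Δ₃''` (right); `Δ₃''` returns to `Δ` after `n+1`
iterations landing at the leftmost position, and `Δ₃'` returns after `n+2`
iterations landing at the rightmost position. -/
theorem possibilityC_split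
    (β₁ β₂ γ₁ γ₂ γ₃ : ℝ) (T : ℝ → ℝ)
    (h0 : 0 < β₁) (h1 : β₁ < β₂) (h2 : β₂ < 1)
    (hT1 : ∀ x ∈ Set.Ico (0:ℝ) β₁, T x = x + γ₁)
    (hT2 : ∀ x ∈ Set.Ico β₁ β₂, T x = x + γ₂)
    (hT3 : ∀ x ∈ Set.Ico β₂ (1:ℝ), T x = x + γ₃)
    (hmap : Set.MapsTo T (Set.Ico 0 1) (Set.Ico 0 1))
    (hγ₁ : 0 < γ₁) (hγ₂ : 0 < γ₂) (hγ₃ : γ₃ < 0)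
    (hright : β₁ + γ₁ = 1) (hleft : β₂ + γ₃ = 0) (hlen : β₁ ≥ 1 - β₂)
    (n : ℕ) (hn : 1 ≤ n)
    (hin : ∀ m : ℕ, 2 ≤ m → m ≤ n → T^[m] '' Set.Ico β₂ 1 ⊆ Set.Ico 0 β₁)
    (hmeet : ∃ x ∈ Set.Ico β₂ (1:ℝ), T^[n + 1] x ∈ Set.Ico β₁ 1)
    (hnotin : ∃ x ∈ Set.Ico β₂ (1:ℝ), T^[n + 1] x ∉ Set.Ico β₁ 1) :
    ∃ s : ℝ, β₂ < s ∧ s < 1 ∧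
      {x ∈ Set.Ico β₂ (1:ℝ) | T^[n + 1] x < β₁} = Set.Ico β₂ s ∧
      {x ∈ Set.Ico β₂ (1:ℝ) | β₁ ≤ T^[n + 1] x} = Set.Ico s 1 ∧
      T^[n + 1] '' Set.Ico s 1 ⊆ Set.Ico β₁ 1 ∧
      sInf (T^[n + 1] '' Set.Ico s 1) = β₁ ∧
      T^[n + 2] '' Set.Ico β₂ s ⊆ Set.Ico β₁ 1 ∧
      sSup (closure (T^[n + 2] '' Set.Ico β₂ s)) = 1 :=
  possibilityC_split_general β₁ β₂ γ₁ γ₃ T h1 hT1 hT3 hmap hright hleft hlen n hin hmeet hnotin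
end

section
/- Let T be an ITM of three intervals on [0,1) with γ₁ > 0, γ₃ < 0, and suppose Δ₁ ∩ T([0,1)) = ∅ or Δ₃ ∩ T([0,1)) = ∅ (case (1), reducible). Then there is a T-invariant half-open interval Δ with T(Δ) ⊆ Δ, Δ regular, such that the first-return map T_Δ is an ITM of at most two intervals; in particular T is of finite type. -/
/-!
If `Δ₁` (resp. `Δ₃`) misses `T([0,1))`, then `T` maps `[0,1)` into `[β₁, 1)` (resp. `[0, β₂)`)
in one step, and on that trap `T` is an exchange of two intervals `[a,m)`, `[m,b)` with
translations `c₁ > 0 > c₂`. Such a map is a rotation on `[m + c₂, m + c₁)`, and every other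
point of the trap moves towards this interval by at least `min c₁ (-c₂)` per step, so after
a bounded number of steps all of `[0,1)` lies in it and the images `Tⁿ([0,1))` stabilise.
-/

open Set Function

section Absorption

variable {α : Type*} {f : α → α} {S D : Set α}

theorem iterate_mem_of_potential_lt (φ : α → ℝ) {δ : ℝ} (hD : MapsTo f D D)
    (hS : MapsTo f S S) (hφ : ∀ x ∈ D \ S, 0 ≤ φ x)
    (hstep : ∀ x ∈ D \ S, f x ∈ S ∨ φ (f x) + δ ≤ φ x) :
    ∀ n : ℕ, ∀ x ∈ D, φ x < n * δ → f^[n] x ∈ S := by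
  intro n
  induction n with
  | zero =>
    intro x hx hφx
    by_contra hxS
    simp only [CharP.cast_eq_zero, zero_mul] at hφx
    linarith [hφ x ⟨hx, hxS⟩]
  | succ n ih =>
    intro x hx hφx
    rw [iterate_succ_apply]
    by_cases hxS : x ∈ S
    · exact hS.iterate n (hS hxS)
    rcases hstep x ⟨hx, hxS⟩ with hfx | hfx
    · exact hS.iterate n hfx
    · exact ih (f x) (hD hx) (by push_cast at hφx; linarith)

theorem exists_iterate_mem_of_potential (φ : α → ℝ) {δ B : ℝ} (hδ : 0 < δ)
    (hD : MapsTo f D D) (hS : MapsTo f S S) (hφ : ∀ x ∈ D \ S, 0 ≤ φ x)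
    (hB : ∀ x ∈ D, φ x ≤ B) (hstep : ∀ x ∈ D \ S, f x ∈ S ∨ φ (f x) + δ ≤ φ x) :
    ∃ K : ℕ, ∀ x ∈ D, f^[K] x ∈ S := by
  obtain ⟨K, hK⟩ := exists_nat_gt (B / δ)
  refine ⟨K, fun x hx => iterate_mem_of_potential_lt φ hD hS hφ hstep K x hx ?_⟩
  calc φ x ≤ B := hB x hx
    _ < K * δ := (div_lt_iff₀ hδ).1 hK

theorem image_iterate_eq_of_absorbing {X : Set α} {n : ℕ} (hS : f '' S = S) (hSX : S ⊆ X)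
    (hn : ∀ x ∈ X, f^[n] x ∈ S) : f^[n] '' X = S := by
  refine Subset.antisymm (image_subset_iff.2 hn) ?_
  calc S = f^[n] '' S := by rw [image_iterate_eq, iterate_fixed hS]
    _ ⊆ f^[n] '' X := image_mono hSX

theorem image_iterate_succ_eq_of_absorbing {X : Set α} {n : ℕ} (hX : MapsTo f X X)
    (hS : f '' S = S) (hSX : S ⊆ X) (hn : ∀ x ∈ X, f^[n] x ∈ S) :
    f^[n + 1] '' X = f^[n] '' X := by
  rw [image_iterate_eq_of_absorbing hS hSX hn, image_iterate_eq_of_absorbing hS hSX]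
  intro x hx
  rw [iterate_succ_apply]
  exact hn (f x) (hX hx)

theorem Set.MapsTo.mapsTo_sdiff_of_inter_image_eq_empty {Y : Set α} (hf : MapsTo f D D)
    (hY : Y ∩ f '' D = ∅) : MapsTo f D (D \ Y) :=
  fun _ hx => ⟨hf hx, fun hy => hY.subset ⟨hy, mem_image_of_mem f hx⟩⟩

end Absorption

theorem add_le_of_forall_mem_Ico_add_lt {a m b c : ℝ} (ham : a < m)
    (h : ∀ x ∈ Ico a m, x + c < b) : m + c ≤ b := by
  by_contra! hlt
  have hx : max a (b - c) ∈ Ico a m := ⟨le_max_left _ _, max_lt ham (by linarith)⟩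
  linarith [h _ hx, le_max_right a (b - c)]

structure IsTwoIntervalITM (T : ℝ → ℝ) (a m b c₁ c₂ : ℝ) : Prop where
  left_lt : a < m
  lt_right : m < b
  eq_left : ∀ x ∈ Ico a m, T x = x + c₁
  eq_right : ∀ x ∈ Ico m b, T x = x + c₂
  mapsTo : MapsTo T (Ico a b) (Ico a b)

namespace IsTwoIntervalITM

variable {T : ℝ → ℝ} {a m b c₁ c₂ : ℝ}

theorem pos_left (h : IsTwoIntervalITM T a m b c₁ c₂) (hc₁ : c₁ ≠ 0) : 0 < c₁ := by
  have ha := h.mapsTo ⟨le_rfl, h.left_lt.trans h.lt_right⟩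
  rw [h.eq_left a ⟨le_rfl, h.left_lt⟩] at ha
  exact lt_of_le_of_ne (by linarith [ha.1]) hc₁.symm

theorem left_add_le (h : IsTwoIntervalITM T a m b c₁ c₂) : m + c₁ ≤ b :=
  add_le_of_forall_mem_Ico_add_lt h.left_lt fun x hx =>
    h.eq_left x hx ▸ (h.mapsTo ⟨hx.1, hx.2.trans h.lt_right⟩).2

theorem neg_right (h : IsTwoIntervalITM T a m b c₁ c₂) (hc₂ : c₂ ≠ 0) : c₂ < 0 := by
  have : b + c₂ ≤ b := add_le_of_forall_mem_Ico_add_lt h.lt_right fun x hx =>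
    h.eq_right x hx ▸ (h.mapsTo ⟨h.left_lt.le.trans hx.1, hx.2⟩).2
  exact lt_of_le_of_ne (by linarith) hc₂

theorem le_right_add (h : IsTwoIntervalITM T a m b c₁ c₂) : a ≤ m + c₂ := by
  have hm := h.mapsTo ⟨h.left_lt.le, h.lt_right⟩
  rw [h.eq_right m ⟨le_rfl, h.lt_right⟩] at hm
  exact hm.1

theorem Ico_rotation_subset (h : IsTwoIntervalITM T a m b c₁ c₂) :
    Ico (m + c₂) (m + c₁) ⊆ Ico a b :=
  Ico_subset_Ico h.le_right_add h.left_add_le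

/-- On `[m + c₂, m + c₁)` the map is the rotation by `c₁` modulo `c₁ - c₂`. -/
theorem image_rotation (h : IsTwoIntervalITM T a m b c₁ c₂) (hc₁ : c₁ ≠ 0) (hc₂ : c₂ ≠ 0) :
    T '' Ico (m + c₂) (m + c₁) = Ico (m + c₂) (m + c₁) := by
  have h₁ := h.pos_left hc₁
  have h₂ := h.neg_right hc₂
  have ha := h.le_right_add
  have hb := h.left_add_le
  ext z
  constructor
  · rintro ⟨y, hy, rfl⟩
    rcases lt_or_ge y m with hym | hym
    · rw [h.eq_left y ⟨by linarith [hy.1], hym⟩]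
      exact ⟨by linarith [hy.1], by linarith⟩
    · rw [h.eq_right y ⟨hym, by linarith [hy.2]⟩]
      exact ⟨by linarith, by linarith [hy.2]⟩
  · intro hz
    rcases lt_or_ge z (m + c₂ + c₁) with hzc | hzc
    · refine ⟨z - c₂, ⟨by linarith [hz.1], by linarith⟩, ?_⟩
      rw [h.eq_right (z - c₂) ⟨by linarith [hz.1], by linarith⟩]
      ring
    · refine ⟨z - c₁, ⟨by linarith, by linarith [hz.2]⟩, ?_⟩
      rw [h.eq_left (z - c₁) ⟨by linarith, by linarith [hz.2]⟩]
      ring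

/-- The potential is the distance to the rotation interval: outside it, an orbit stays on its
side and moves towards it by `c₁` or by `-c₂` per step. -/
theorem exists_iterate_mem_rotation (h : IsTwoIntervalITM T a m b c₁ c₂) (hc₁ : c₁ ≠ 0)
    (hc₂ : c₂ ≠ 0) : ∃ K : ℕ, ∀ y ∈ Ico a b, T^[K] y ∈ Ico (m + c₂) (m + c₁) := by
  have h₁ := h.pos_left hc₁
  have h₂ := h.neg_right hc₂
  have ha := h.le_right_add
  have hb := h.left_add_le
  have hm := h.lt_right
  have hδ₁ := min_le_left c₁ (-c₂)
  have hδ₂ := min_le_right c₁ (-c₂)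
  refine exists_iterate_mem_of_potential (B := b - a)
    (fun y => max (m + c₂ - y) (y - (m + c₁))) (lt_min h₁ (neg_pos.2 h₂)) h.mapsTo
    (mapsTo_iff_image_subset.2 (h.image_rotation hc₁ hc₂).subset) ?nonneg ?bounded ?step
  case nonneg =>
    rintro y ⟨-, hy⟩
    rcases not_and_or.1 hy with hy | hy
    · exact le_max_of_le_left (by linarith [not_le.1 hy])
    · exact le_max_of_le_right (by linarith [not_lt.1 hy])
  case bounded => exact fun y hy => max_le (by linarith [hy.1]) (by linarith [hy.2])
  case step =>
    rintro y ⟨hy, hyS⟩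
    by_cases hTy : T y ∈ Ico (m + c₂) (m + c₁)
    · exact Or.inl hTy
    refine Or.inr ?_
    rw [← max_add_add_right]
    rcases not_and_or.1 hyS with hyS | hyS
    · have hTy' := h.eq_left y ⟨hy.1, by linarith [not_le.1 hyS]⟩
      have : y + c₁ < m + c₂ := by
        by_contra! hge
        exact hTy (hTy' ▸ ⟨hge, by linarith [not_le.1 hyS]⟩)
      rw [hTy']
      exact le_max_of_le_left (max_le (by linarith) (by linarith))
    · have hTy' := h.eq_right y ⟨by linarith [not_lt.1 hyS], hy.2⟩
      have : m + c₁ ≤ y + c₂ := by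
        by_contra! hlt
        exact hTy (hTy' ▸ ⟨by linarith [not_lt.1 hyS], hlt⟩)
      rw [hTy']
      exact le_max_of_le_right (max_le (by linarith) (by linarith))

end IsTwoIntervalITM

/-- The reducible case for an ITM of three intervals: if `Δ₁` or `Δ₃` misses
`T([0,1))`, then there is a regular trap interval `Δ` on which the
first-return map (`= T|_Δ`) is an ITM of at most two intervals; in
particular `T` is of finite type. -/
theorem reducible_case_finite_type
    (β₁ β₂ γ₁ γ₂ γ₃ : ℝ) (T : ℝ → ℝ)
    (h0 : 0 < β₁) (h1 : β₁ < β₂) (h2 : β₂ < 1)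
    (hT1 : ∀ x ∈ Set.Ico (0:ℝ) β₁, T x = x + γ₁)
    (hT2 : ∀ x ∈ Set.Ico β₁ β₂, T x = x + γ₂)
    (hT3 : ∀ x ∈ Set.Ico β₂ (1:ℝ), T x = x + γ₃)
    (hmap : Set.MapsTo T (Set.Ico 0 1) (Set.Ico 0 1))
    (hγ₁ : γ₁ ≠ 0) (hγ₂ : γ₂ ≠ 0) (hγ₃ : γ₃ ≠ 0)
    (hred : Set.Ico (0:ℝ) β₁ ∩ T '' Set.Ico 0 1 = ∅ ∨
            Set.Ico β₂ (1:ℝ) ∩ T '' Set.Ico 0 1 = ∅) :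
    (∃ a b : ℝ, a < b ∧ Set.Ico a b ⊆ Set.Ico 0 1 ∧
      -- `Δ = [a, b)` is a trap
      T '' Set.Ico a b ⊆ Set.Ico a b ∧
      -- `Δ` is regular
      (∃ N : ℕ, ∀ x ∈ Set.Ico (0:ℝ) 1, ∃ n : ℕ, 1 ≤ n ∧ n < N ∧
        T^[n] x ∈ Set.Ico a b) ∧
      -- the first-return map `T_Δ = T|_Δ` is an ITM of at most two intervals
      (∃ m c₁ c₂ : ℝ, a ≤ m ∧ m ≤ b ∧
        (∀ x ∈ Set.Ico a m, T x = x + c₁) ∧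
        (∀ x ∈ Set.Ico m b, T x = x + c₂))) ∧
    -- in particular, `T` is of finite type
    (∃ n : ℕ, T^[n + 1] '' Set.Ico (0:ℝ) 1 = T^[n] '' Set.Ico (0:ℝ) 1) := by
  obtain ⟨a, m, b, c₁, c₂, hITM, hsub, hc₁, hc₂, habs⟩ : ∃ a m b c₁ c₂ : ℝ,
      IsTwoIntervalITM T a m b c₁ c₂ ∧ Ico a b ⊆ Ico 0 1 ∧ c₁ ≠ 0 ∧ c₂ ≠ 0 ∧
        MapsTo T (Ico 0 1) (Ico a b) := by
    have hsub₁ : Ico β₁ 1 ⊆ Ico (0 : ℝ) 1 := Ico_subset_Ico_left h0.le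
    have hsub₃ : Ico 0 β₂ ⊆ Ico (0 : ℝ) 1 := Ico_subset_Ico_right h2.le
    rcases hred with hred | hred
    · have habs : MapsTo T (Ico 0 1) (Ico β₁ 1) :=
        (hmap.mapsTo_sdiff_of_inter_image_eq_empty hred).mono_right
          fun y hy => ⟨not_lt.1 fun hy' => hy.2 ⟨hy.1.1, hy'⟩, hy.1.2⟩
      exact ⟨β₁, β₂, 1, γ₂, γ₃, ⟨h1, h2, hT2, hT3, habs.mono_left hsub₁⟩, hsub₁, hγ₂, hγ₃, habs⟩
    · have habs : MapsTo T (Ico 0 1) (Ico 0 β₂) :=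
        (hmap.mapsTo_sdiff_of_inter_image_eq_empty hred).mono_right
          fun y hy => ⟨hy.1.1, not_le.1 fun hy' => hy.2 ⟨hy', hy.1.2⟩⟩
      exact ⟨0, β₁, β₂, γ₁, γ₂, ⟨h0, h1, hT1, hT2, habs.mono_left hsub₃⟩, hsub₃, hγ₁, hγ₂, habs⟩
  refine ⟨⟨a, b, hITM.left_lt.trans hITM.lt_right, hsub, hITM.mapsTo.image_subset,
    ⟨2, fun x hx => ⟨1, le_rfl, one_lt_two, habs hx⟩⟩, m, c₁, c₂, hITM.left_lt.le,
    hITM.lt_right.le, hITM.eq_left, hITM.eq_right⟩, ?_⟩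
  obtain ⟨K, hK⟩ := hITM.exists_iterate_mem_rotation hc₁ hc₂
  refine ⟨K + 1, image_iterate_succ_eq_of_absorbing hmap (hITM.image_rotation hc₁ hc₂)
    (hITM.Ico_rotation_subset.trans hsub) fun x hx => ?_⟩
  rw [iterate_succ_apply]
  exact hK _ (habs hx)
end
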